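/- arXiv:1807.08295 — 2 statements merged into one kernel-verified Lean document; each statement's English description precedes it below -/
import Mathlib

section
/- Let G be a graph and G\bar{G} its complementary prism. If u is a simplicial vertex of G and its corresponding vertex \bar{u} is a simplicial vertex of \bar{G}, then every geodetic hull set S of G\bar{G} satisfies S ∩ {u, \bar{u}} ≠ ∅. -/
open SimpleGraph

/-- The geodetic closed interval `I[u,v]`: `u`, `v`, and all vertices lying on
some shortest `u`–`v` path. -/
def geoInterval {V : Type*} (G : SimpleGraph V) (u v : V) : Set V :=
  {w | w = u ∨ w = v ∨ (G.Reachable u v ∧ G.dist u w + G.dist w v = G.dist u v)}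

/-- A set is geodetically convex if it is closed under intervals. -/
def IsGeoConvex {V : Type*} (G : SimpleGraph V) (S : Set V) : Prop :=
  ∀ u ∈ S, ∀ v ∈ S, geoInterval G u v ⊆ S

/-- The geodetic convex hull: the smallest convex set containing `S`. -/
def geoHull {V : Type*} (G : SimpleGraph V) (S : Set V) : Set V :=
  ⋂₀ {T | IsGeoConvex G T ∧ S ⊆ T}

/-- `S` is a hull set if its convex hull is the whole vertex set. -/
def IsHullSet {V : Type*} (G : SimpleGraph V) (S : Set V) : Prop :=
  geoHull G S = Set.univ

/-- The geodetic hull number: minimum cardinality of a hull set. -/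
noncomputable def hullNumber {V : Type*} (G : SimpleGraph V) : ℕ :=
  sInf {n | ∃ S : Set V, S.ncard = n ∧ IsHullSet G S}

/-- A vertex is simplicial if its closed neighborhood induces a clique. -/
def IsSimplicial {V : Type*} (G : SimpleGraph V) (v : V) : Prop :=
  ∀ a ∈ G.neighborSet v, ∀ b ∈ G.neighborSet v, a ≠ b → G.Adj a b

/-- The complementary prism `G G̅`: disjoint union of `G` (left copies) and its
complement (right copies), plus a perfect matching between corresponding vertices. -/
def compPrism {V : Type*} (G : SimpleGraph V) : SimpleGraph (V ⊕ V) where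
  Adj x y :=
    match x, y with
    | .inl u, .inl w => G.Adj u w
    | .inr u, .inr w => u ≠ w ∧ ¬ G.Adj u w
    | .inl u, .inr w => u = w
    | .inr u, .inl w => u = w
  symm := by
    constructor
    rintro (u | u) (w | w) h
    · exact h.symm
    · exact h.symm
    · exact h.symm
    · exact ⟨h.1.symm, fun a => h.2 a.symm⟩
  loopless := by
    constructor
    rintro (u | u) h
    · exact G.irrefl h
    · exact h.1 rfl

/-!
If neither `u` nor `ū` lies in `S`, then `S` is contained in the set of all other vertices,
and this set is convex. Indeed, a shortest path through `u` between two other vertices enters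
and leaves `u` through two non-adjacent neighbours. The neighbours of `u` other than `ū` form a
clique since `u` is simplicial in `G`, so the path must pass through `ū` right before (or after)
`u`. But any vertex `x ≠ u` adjacent to `ū` and any neighbour `y ≠ ū` of `u` are at distance at
most `2` in the prism, while the path `x ū u y` would have to be a shortest path of length `3`.
The same argument applies to `ū`, using that `ū` is simplicial in `Gᶜ`.
-/

namespace SimpleGraph

variable {W : Type*} {H : SimpleGraph W}

lemma dist_le_two_of_adj_of_adj {x y z : W} (hxz : H.Adj x z) (hzy : H.Adj z y) :
    H.dist x y ≤ 2 :=
  dist_le (.cons hxz (.cons hzy .nil))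

lemma Connected.exists_adj_dist_add_one_eq (hH : H.Connected) {a v : W} (hav : a ≠ v) :
    ∃ x, H.Adj v x ∧ H.dist a x + 1 = H.dist a v := by
  obtain ⟨p, hp⟩ := hH.exists_walk_length_eq_dist v a
  obtain ⟨x, hvx, q, rfl⟩ := Walk.exists_eq_cons_of_ne hav.symm p
  have hqx : H.dist a x ≤ q.length := by simpa using dist_le q.reverse
  have hvxa : H.dist a v ≤ H.dist a x + H.dist x v := hH.dist_triangle
  rw [dist_eq_one_iff_adj.mpr hvx.symm] at hvxa
  rw [Walk.length_cons, dist_comm] at hp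
  exact ⟨x, hvx, by omega⟩

lemma Connected.add_le_dist_of_dist_add_dist_eq (hH : H.Connected) {a b c x y : W} {k l : ℕ}
    (hgeo : H.dist a c + H.dist c b = H.dist a b)
    (hx : H.dist a x + k = H.dist a c) (hy : H.dist y b + l = H.dist c b) :
    k + l ≤ H.dist x y := by
  have hxb : H.dist a b ≤ H.dist a x + H.dist x b := hH.dist_triangle
  have hyb : H.dist x b ≤ H.dist x y + H.dist y b := hH.dist_triangle
  omega

variable {c m : W}

/-- `m` cannot precede `c` on a shortest `a`–`b` path through `c`: the vertices before `m` and
after `c` on it would be at distance `3`. -/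
lemma Connected.dist_add_dist_ne_of_dist_add_one_eq (hH : H.Connected) (hcm : H.Adj c m)
    (hcross : ∀ x ∈ H.neighborSet c \ {m}, ∀ y ∈ H.neighborSet m \ {c}, H.dist x y ≤ 2)
    {a b : W} (ham : a ≠ m) (hbc : b ≠ c) (hm : H.dist a m + 1 = H.dist a c) :
    H.dist a c + H.dist c b ≠ H.dist a b := by
  intro hgeo
  obtain ⟨y, hcy, hy⟩ := hH.exists_adj_dist_add_one_eq hbc
  obtain ⟨x, hmx, hx⟩ := hH.exists_adj_dist_add_one_eq ham
  rw [dist_comm (u := b) (v := y), dist_comm (u := b) (v := c)] at hy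
  have hym : y ≠ m := by
    rintro rfl
    have := hH.add_le_dist_of_dist_add_dist_eq hgeo hm hy
    simp at this
  have hxc : x ≠ c := by
    rintro rfl
    omega
  have hxy : 2 + 1 ≤ H.dist x y := hH.add_le_dist_of_dist_add_dist_eq hgeo (by omega) hy
  have := hcross y ⟨hcy, hym⟩ x ⟨hmx, hxc⟩
  rw [dist_comm] at this
  omega

lemma Connected.dist_add_dist_ne_of_pairwise_adj (hH : H.Connected) (hcm : H.Adj c m)
    (hclique : (H.neighborSet c \ {m}).Pairwise H.Adj)
    (hcross : ∀ x ∈ H.neighborSet c \ {m}, ∀ y ∈ H.neighborSet m \ {c}, H.dist x y ≤ 2)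
    {a b : W} (hac : a ≠ c) (ham : a ≠ m) (hbc : b ≠ c) (hbm : b ≠ m) :
    H.dist a c + H.dist c b ≠ H.dist a b := by
  intro hgeo
  obtain ⟨x, hcx, hx⟩ := hH.exists_adj_dist_add_one_eq hac
  obtain ⟨y, hcy, hy⟩ := hH.exists_adj_dist_add_one_eq hbc
  rcases eq_or_ne x m with rfl | hxm
  · exact hH.dist_add_dist_ne_of_dist_add_one_eq hcm hcross ham hbc hx hgeo
  rcases eq_or_ne y m with rfl | hym
  · refine hH.dist_add_dist_ne_of_dist_add_one_eq hcm hcross hbm hac hy ?_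
    rw [dist_comm (u := b) (v := c), dist_comm (u := c) (v := a), dist_comm (u := b) (v := a)]
    omega
  rw [dist_comm (u := b) (v := y), dist_comm (u := b) (v := c)] at hy
  have hxy : 1 + 1 ≤ H.dist x y := hH.add_le_dist_of_dist_add_dist_eq hgeo hx hy
  rcases eq_or_ne x y with rfl | hne
  · simp at hxy
  · rw [(dist_eq_one_iff_adj.mpr (hclique ⟨hcx, hxm⟩ ⟨hcy, hym⟩ hne))] at hxy
    omega

end SimpleGraph

lemma geoHull_subset {W : Type*} {H : SimpleGraph W} {S T : Set W} (hT : IsGeoConvex H T)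
    (hST : S ⊆ T) : geoHull H S ⊆ T :=
  Set.sInter_subset_of_mem ⟨hT, hST⟩

lemma isGeoConvex_compl_pair {W : Type*} {H : SimpleGraph W} {c m : W} (hH : H.Connected)
    (hcm : H.Adj c m) (hc : (H.neighborSet c \ {m}).Pairwise H.Adj)
    (hm : (H.neighborSet m \ {c}).Pairwise H.Adj)
    (hcross : ∀ x ∈ H.neighborSet c \ {m}, ∀ y ∈ H.neighborSet m \ {c}, H.dist x y ≤ 2) :
    IsGeoConvex H {c, m}ᶜ := by
  rintro a ha b hb w (rfl | rfl | ⟨-, hgeo⟩)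
  · exact ha
  · exact hb
  simp only [Set.mem_compl_iff, Set.mem_insert_iff, Set.mem_singleton_iff, not_or] at ha hb ⊢
  constructor
  · rintro rfl
    exact hH.dist_add_dist_ne_of_pairwise_adj hcm hc hcross ha.1 ha.2 hb.1 hb.2 hgeo
  · rintro rfl
    refine hH.dist_add_dist_ne_of_pairwise_adj hcm.symm hm (fun y hy x hx ↦ ?_)
      ha.2 ha.1 hb.2 hb.1 hgeo
    rw [dist_comm]
    exact hcross x hx y hy

namespace compPrism

variable {V : Type*} (G : SimpleGraph V) {u v w : V}

@[simp] lemma adj_inl_inl : (compPrism G).Adj (.inl v) (.inl w) ↔ G.Adj v w := Iff.rfl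

@[simp] lemma adj_inr_inr : (compPrism G).Adj (.inr v) (.inr w) ↔ v ≠ w ∧ ¬G.Adj v w :=
  Iff.rfl

@[simp] lemma adj_inl_inr : (compPrism G).Adj (.inl v) (.inr w) ↔ v = w := Iff.rfl

@[simp] lemma adj_inr_inl : (compPrism G).Adj (.inr v) (.inl w) ↔ v = w := Iff.rfl

lemma reachable_inl_inl (v w : V) : (compPrism G).Reachable (.inl v) (.inl w) := by
  by_cases hvw : v = w
  · rw [hvw]
  by_cases hG : G.Adj v w
  · exact Adj.reachable ((adj_inl_inl G).mpr hG)
  have hv : (compPrism G).Adj (.inl v) (.inr v) := (adj_inl_inr G).mpr rfl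
  have hvw' : (compPrism G).Adj (.inr v) (.inr w) := (adj_inr_inr G).mpr ⟨hvw, hG⟩
  have hw : (compPrism G).Adj (.inr w) (.inl w) := (adj_inr_inl G).mpr rfl
  exact hv.reachable.trans (hvw'.reachable.trans hw.reachable)

lemma connected [Nonempty V] : (compPrism G).Connected := by
  obtain ⟨v⟩ := ‹Nonempty V›
  refine (connected_iff_exists_forall_reachable _).mpr ⟨.inl v, ?_⟩
  rintro (w | w)
  · exact reachable_inl_inl G v w
  · exact (reachable_inl_inl G v w).trans ((adj_inl_inr G).mpr rfl).reachable

lemma pairwise_adj_neighborSet_inl (hu : IsSimplicial G u) :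
    ((compPrism G).neighborSet (.inl u) \ {.inr u}).Pairwise (compPrism G).Adj := by
  rintro (x | x) ⟨hx, hxu⟩ (y | y) ⟨hy, hyu⟩ hxy <;>
    simp_all only [mem_neighborSet, adj_inl_inl, adj_inl_inr, Set.mem_singleton_iff, ne_eq,
      Sum.inl.injEq, not_true_eq_false]
  exact hu x hx y hy hxy

lemma pairwise_adj_neighborSet_inr (hu : IsSimplicial Gᶜ u) :
    ((compPrism G).neighborSet (.inr u) \ {.inl u}).Pairwise (compPrism G).Adj := by
  rintro (x | x) ⟨hx, hxu⟩ (y | y) ⟨hy, hyu⟩ hxy <;>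
    simp_all only [mem_neighborSet, adj_inr_inr, adj_inr_inl, Set.mem_singleton_iff, ne_eq,
      Sum.inr.injEq, not_true_eq_false, not_false_eq_true, true_and]
  have hxy' := hu x ((G.compl_adj u x).mpr hx) y ((G.compl_adj u y).mpr hy) hxy
  exact ((G.compl_adj x y).mp hxy').2

lemma dist_le_two_of_mem_neighborSet (u : V) :
    ∀ x ∈ (compPrism G).neighborSet (.inl u) \ {.inr u},
      ∀ y ∈ (compPrism G).neighborSet (.inr u) \ {.inl u}, (compPrism G).dist x y ≤ 2 := by
  rintro (x | x) ⟨hx, hxu⟩ (y | y) ⟨hy, hyu⟩ <;>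
    simp_all only [mem_neighborSet, adj_inl_inl, adj_inl_inr, adj_inr_inr, adj_inr_inl,
      Set.mem_singleton_iff, not_true_eq_false]
  have hxy : x ≠ y := by
    rintro rfl
    exact hy.2 hx
  by_cases hG : G.Adj x y
  · exact dist_le_two_of_adj_of_adj ((adj_inl_inl G).mpr hG) ((adj_inl_inr G).mpr rfl)
  · exact dist_le_two_of_adj_of_adj ((adj_inl_inr G).mpr rfl) ((adj_inr_inr G).mpr ⟨hxy, hG⟩)

end compPrism

theorem hullSet_inter_simplicial_pair_general {V : Type*} (G : SimpleGraph V) (u : V)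
    (h1 : IsSimplicial G u) (h2 : IsSimplicial Gᶜ u)
    (S : Set (V ⊕ V)) (hS : IsHullSet (compPrism G) S) :
    Sum.inl u ∈ S ∨ Sum.inr u ∈ S := by
  have : Nonempty V := ⟨u⟩
  have hconv : IsGeoConvex (compPrism G) {.inl u, .inr u}ᶜ :=
    isGeoConvex_compl_pair (compPrism.connected G) ((compPrism.adj_inl_inr G).mpr rfl)
      (compPrism.pairwise_adj_neighborSet_inl G h1) (compPrism.pairwise_adj_neighborSet_inr G h2)
      (compPrism.dist_le_two_of_mem_neighborSet G u)
  by_contra! hu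
  have hST : S ⊆ {.inl u, .inr u}ᶜ := by
    rintro x hx (rfl | rfl)
    exacts [hu.1 hx, hu.2 hx]
  have hhull := geoHull_subset hconv hST
  rw [hS] at hhull
  exact hhull (Set.mem_univ (.inl u)) (Set.mem_insert _ _)

theorem hullSet_inter_simplicial_pair {V : Type*} [Fintype V] (G : SimpleGraph V) (u : V)
    (h1 : IsSimplicial G u) (h2 : IsSimplicial Gᶜ u)
    (S : Set (V ⊕ V)) (hS : IsHullSet (compPrism G) S) :
    Sum.inl u ∈ S ∨ Sum.inr u ∈ S :=
  hullSet_inter_simplicial_pair_general G u h1 h2 S hS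
end

section
/- Let T be a tree on at least 3 vertices that is not a star K_{1,n}. Then the geodetic hull number of the complementary prism T\bar{T} equals 2. -/
open SimpleGraph

/-!
Since `T` has no dominating vertex it contains a path `a b c d`, and as `T` is a tree,
`d(a, d) = 3`. In `T T̄` the vertices `a`, `d` are still at distance `3`, realised both by
`a b c d` and by `a a' d' d`, so their hull contains `a, b, c, d, a', d'`; then `b'`, `c'` are
common neighbours of `b, d'` and `c, a'`. Every other vertex `x` of the tree is adjacent to at
most one of `a, b, c, d`, so in `T̄` it is a common neighbour of `a', b'` or of `c', d'`. Once all
primed vertices lie in the hull, the unprimed ones follow along the edges of `T`, each `x` being a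
common neighbour of `x'` and a neighbour `y` of `x` in `T`. A hull set of size one is
impossible because singletons are convex in a connected graph.
-/

section Hull

variable {V : Type*} {G : SimpleGraph V} {S C : Set V} {u v w : V}

lemma subset_geoHull : S ⊆ geoHull G S :=
  fun _ hx => Set.mem_sInter.2 fun _ hC => hC.2 hx

lemma geoHull_subset_s7 (hC : IsGeoConvex G C) (hS : S ⊆ C) : geoHull G S ⊆ C :=
  Set.sInter_subset_of_mem ⟨hC, hS⟩

lemma isGeoConvex_geoHull : IsGeoConvex G (geoHull G S) :=
  fun u hu v hv _ hw => Set.mem_sInter.2 fun _ hC =>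
    hC.1 u (Set.mem_sInter.1 hu _ hC) v (Set.mem_sInter.1 hv _ hC) hw

lemma SimpleGraph.Preconnected.mem_geoInterval_of_dist_add_le (hG : G.Preconnected)
    (h : G.dist u w + G.dist w v ≤ G.dist u v) : w ∈ geoInterval G u v :=
  Or.inr <| Or.inr ⟨hG u v, le_antisymm h ((hG u w).dist_triangle_left v)⟩

lemma SimpleGraph.Preconnected.mem_geoHull_of_dist_add_le (hG : G.Preconnected)
    (hu : u ∈ geoHull G S) (hv : v ∈ geoHull G S) (h : G.dist u w + G.dist w v ≤ G.dist u v) :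
    w ∈ geoHull G S :=
  isGeoConvex_geoHull u hu v hv (hG.mem_geoInterval_of_dist_add_le h)

lemma SimpleGraph.Preconnected.mem_geoHull_of_adj_of_adj (hG : G.Preconnected)
    (hu : u ∈ geoHull G S) (hv : v ∈ geoHull G S) (huv : u ≠ v) (hnuv : ¬G.Adj u v)
    (huw : G.Adj u w) (hwv : G.Adj w v) : w ∈ geoHull G S :=
  hG.mem_geoHull_of_dist_add_le hu hv <| by
    rw [dist_eq_one_iff_adj.2 huw, dist_eq_one_iff_adj.2 hwv]
    exact (hG u v).one_lt_dist_of_ne_of_not_adj huv hnuv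

lemma SimpleGraph.Preconnected.isGeoConvex_singleton (hG : G.Preconnected) (x : V) :
    IsGeoConvex G {x} := by
  intro u hu v hv w hw
  rw [Set.mem_singleton_iff] at hu hv ⊢
  subst hu hv
  rcases hw with rfl | rfl | ⟨-, h⟩
  · rfl
  · rfl
  · rw [dist_self] at h
    exact ((hG _ _).dist_eq_zero_iff.1 (by omega)).symm

lemma SimpleGraph.Preconnected.two_le_ncard_of_isHullSet [Finite V] [Nontrivial V]
    (hG : G.Preconnected) (hS : IsHullSet G S) : 2 ≤ S.ncard := by
  by_contra! h
  obtain ⟨x, hx⟩ := (Set.ncard_le_one_iff_subset_singleton S.toFinite).1 (by omega)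
  obtain ⟨y, hyx⟩ := exists_ne x
  exact hyx (geoHull_subset_s7 (hG.isGeoConvex_singleton x) hx (hS ▸ Set.mem_univ y))

lemma SimpleGraph.Preconnected.hullNumber_eq_two [Finite V] (hG : G.Preconnected) (huv : u ≠ v)
    (h : IsHullSet G {u, v}) : hullNumber G = 2 := by
  have : Nontrivial V := ⟨⟨u, v, huv⟩⟩
  have h2 : 2 ∈ {n | ∃ S : Set V, S.ncard = n ∧ IsHullSet G S} :=
    ⟨_, Set.ncard_pair huv, h⟩
  refine le_antisymm (Nat.sInf_le h2) (le_csInf ⟨_, h2⟩ ?_)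
  rintro n ⟨S, rfl, hS⟩
  exact hG.two_le_ncard_of_isHullSet hS

end Hull

namespace SimpleGraph

variable {V : Type*} {G : SimpleGraph V} {u v w a b d : V}

lemma dist_le_two_of_adj_of_adj_s7 (huv : G.Adj u v) (hvw : G.Adj v w) : G.dist u w ≤ 2 :=
  dist_le (.cons huv (.cons hvw .nil))

lemma ne_and_not_adj_of_two_lt_edist (h : 2 < G.edist a d) (hab : G.Adj a b) :
    b ≠ d ∧ ¬G.Adj b d := by
  obtain ⟨-, hnad, hcommon⟩ := two_lt_edist_iff.1 h
  refine ⟨by rintro rfl; exact hnad hab, fun hbd => ?_⟩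
  have : b ∈ G.commonNeighbors a d := G.mem_commonNeighbors.2 ⟨hab, hbd.symm⟩
  simp [hcommon] at this

lemma Reachable.exists_adj_adj_not_adj (hr : G.Reachable u v) (huv : u ≠ v) (hnuv : ¬G.Adj u v) :
    ∃ m w, G.Adj u m ∧ G.Adj m w ∧ u ≠ w ∧ ¬G.Adj u w := by
  obtain ⟨p, hp⟩ := hr.exists_walk_length_eq_dist
  match p, hp with
  | .nil, _ => exact absurd rfl huv
  | .cons h .nil, _ => exact absurd h hnuv
  | .cons h₁ (.cons h₂ q), hp =>
    refine ⟨_, _, h₁, h₂, ?_, fun h => ?_⟩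
    · rintro rfl
      have := dist_le q
      simp only [Walk.length_cons] at hp
      omega
    · have := dist_le (q.cons h)
      simp only [Walk.length_cons] at hp this
      omega

/-- Starting from a vertex `u`, a non-neighbour of `u` gives an induced path `u m w`, and a
non-neighbour of `m` gives an induced path `m q r`; then `r q m t` is a path for whichever
`t ∈ {u, w}` differs from `q`. -/
lemma Connected.exists_adj_adj_adj (hG : G.Connected)
    (hdom : ¬∃ c, ∀ v, v ≠ c → G.Adj c v) :
    ∃ a b c d, G.Adj a b ∧ G.Adj b c ∧ G.Adj c d ∧ a ≠ c ∧ b ≠ d ∧ a ≠ d := by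
  push Not at hdom
  obtain ⟨u⟩ := hG.nonempty
  obtain ⟨v, hvu, huv⟩ := hdom u
  obtain ⟨m, w, hum, hmw, huw, -⟩ := (hG u v).exists_adj_adj_not_adj hvu.symm huv
  obtain ⟨z, hzm, hmz⟩ := hdom m
  obtain ⟨q, r, hmq, hqr, hmr, hnmr⟩ := (hG m z).exists_adj_adj_not_adj hzm.symm hmz
  have path_to : ∀ t, G.Adj m t → q ≠ t →
      ∃ a b c d, G.Adj a b ∧ G.Adj b c ∧ G.Adj c d ∧ a ≠ c ∧ b ≠ d ∧ a ≠ d :=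
    fun t hmt hqt =>
      ⟨r, q, m, t, hqr.symm, hmq.symm, hmt, hmr.symm, hqt, by rintro rfl; exact hnmr hmt⟩
  by_cases hqu : q = u
  · exact path_to w hmw (hqu ▸ huw)
  · exact path_to u hum.symm hqu

lemma IsAcyclic.dist_eq_length (hG : G.IsAcyclic) {p : G.Walk u v} (hp : p.IsPath) :
    G.dist u v = p.length := by
  obtain ⟨q, hq, hlen⟩ := p.reachable.exists_path_of_dist
  rw [← hlen, congrArg (·.1.length) ((hG.subsingleton_path u v).elim ⟨p, hp⟩ ⟨q, hq⟩)]

lemma IsAcyclic.not_adj_of_isPath (hG : G.IsAcyclic) {p : G.Walk u v} (hp : p.IsPath)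
    (hlen : 2 ≤ p.length) : ¬G.Adj u v := fun h => by
  have := hG.dist_eq_length hp
  rw [dist_eq_one_iff_adj.2 h] at this
  omega

lemma IsAcyclic.not_adj_and_not_adj_or_not_adj_and_not_adj {c x : V} (hG : G.IsAcyclic)
    (hab : G.Adj a b) (hbc : G.Adj b c) (hcd : G.Adj c d) (had : 2 < G.edist a d)
    (hxb : x ≠ b) (hxc : x ≠ c) :
    (¬G.Adj x a ∧ ¬G.Adj x b) ∨ (¬G.Adj x c ∧ ¬G.Adj x d) := by
  have hac : a ≠ c := (ne_and_not_adj_of_two_lt_edist (edist_comm.trans_gt had) hcd.symm).1.symm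
  have hbd : b ≠ d := (ne_and_not_adj_of_two_lt_edist had hab).1
  have hxac : ¬(G.Adj x a ∧ G.Adj x c) := fun ⟨hxa, hxc'⟩ =>
    hG.not_adj_of_isPath (p := .cons hxa (.cons hab (.cons hbc .nil)))
      (by simp [Walk.isPath_def, hxa.ne, hxb, hxc'.ne, hab.ne, hac, hbc.ne]) (by simp) hxc'
  have hxbd : ¬(G.Adj x b ∧ G.Adj x d) := fun ⟨hxb', hxd⟩ =>
    hG.not_adj_of_isPath (p := .cons hxb' (.cons hbc (.cons hcd .nil)))
      (by simp [Walk.isPath_def, hxb'.ne, hxc, hxd.ne, hbc.ne, hbd, hcd.ne]) (by simp) hxd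
  have hxbc : ¬(G.Adj x b ∧ G.Adj x c) := fun ⟨hxb', hxc'⟩ =>
    hG.not_adj_of_isPath (p := .cons hxb' (.cons hbc .nil))
      (by simp [Walk.isPath_def, hxb'.ne, hxc'.ne, hbc.ne]) (by simp) hxc'
  have hxad : ¬(G.Adj x a ∧ G.Adj x d) := fun ⟨hxa, hxd⟩ =>
    (ne_and_not_adj_of_two_lt_edist had hxa.symm).2 hxd
  tauto

end SimpleGraph

section ComplementaryPrism

variable {V : Type*} {G : SimpleGraph V} {S : Set (V ⊕ V)} {u v a b c d : V}

@[simp] lemma compPrism_adj_inl_inl : (compPrism G).Adj (.inl u) (.inl v) ↔ G.Adj u v := Iff.rfl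

@[simp] lemma compPrism_adj_inr_inr :
    (compPrism G).Adj (.inr u) (.inr v) ↔ u ≠ v ∧ ¬G.Adj u v := Iff.rfl

@[simp] lemma compPrism_adj_inl_inr : (compPrism G).Adj (.inl u) (.inr v) ↔ u = v := Iff.rfl

@[simp] lemma compPrism_adj_inr_inl : (compPrism G).Adj (.inr u) (.inl v) ↔ u = v := Iff.rfl

lemma compPrism_connected [Nonempty V] (G : SimpleGraph V) : (compPrism G).Connected := by
  have hmatch (u : V) : (compPrism G).Reachable (.inl u) (.inr u) := Adj.reachable rfl
  have hleft (u v : V) : (compPrism G).Reachable (.inl u) (.inl v) := by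
    by_cases huv : u = v
    · rw [huv]
    by_cases hadj : G.Adj u v
    · exact Adj.reachable hadj
    · exact (hmatch u).trans <|
        (compPrism_adj_inr_inr.2 ⟨huv, hadj⟩).reachable.trans (hmatch v).symm
  refine Connected.mk fun x y => ?_
  rcases x with u | u <;> rcases y with v | v
  · exact hleft u v
  · exact (hleft u v).trans (hmatch v)
  · exact (hmatch u).symm.trans (hleft u v)
  · exact (hmatch u).symm.trans ((hleft u v).trans (hmatch v))

lemma compPrism_dist_inl_inl_of_two_lt_edist (h : 2 < G.edist a d) :
    (compPrism G).dist (.inl a) (.inl d) = 3 := by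
  obtain ⟨had, hnad, hcommon⟩ := two_lt_edist_iff.1 h
  have hcommon' : (compPrism G).commonNeighbors (.inl a) (.inl d) = ∅ := by
    ext (z | z) <;> simp only [mem_commonNeighbors, compPrism_adj_inl_inl, compPrism_adj_inl_inr]
    · simpa [mem_commonNeighbors] using Set.eq_empty_iff_forall_notMem.1 hcommon z
    · simpa using fun hza hzd => had (hza.trans hzd.symm)
  have hgt : 2 < (compPrism G).edist (.inl a) (.inl d) :=
    two_lt_edist_iff.2 ⟨by simpa using had, by simpa using hnad, hcommon'⟩
  have hle : (compPrism G).dist (.inl a) (.inl d) ≤ 3 :=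
    dist_le (.cons (compPrism_adj_inl_inr.2 rfl)
      (.cons (compPrism_adj_inr_inr.2 ⟨had, hnad⟩) (.cons (compPrism_adj_inr_inl.2 rfl) .nil)))
  have : Nonempty V := ⟨a⟩
  rw [← (compPrism_connected G _ _).coe_dist_eq_edist] at hgt
  have : 2 < (compPrism G).dist (.inl a) (.inl d) := by exact_mod_cast hgt
  omega

lemma mem_geoHull_compPrism_pair_of_dist_add_le (had : 2 < G.edist a d) {z : V ⊕ V}
    (hz : (compPrism G).dist (.inl a) z + (compPrism G).dist z (.inl d) ≤ 3) :
    z ∈ geoHull (compPrism G) {.inl a, .inl d} :=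
  have : Nonempty V := ⟨a⟩
  (compPrism_connected G).preconnected.mem_geoHull_of_dist_add_le (subset_geoHull (by simp))
    (subset_geoHull (by simp)) (compPrism_dist_inl_inl_of_two_lt_edist had ▸ hz)

lemma inr_mem_geoHull_compPrism_of_inl {x y : V} (hx : .inl x ∈ geoHull (compPrism G) S)
    (hy : .inr y ∈ geoHull (compPrism G) S) (hxy : x ≠ y) (hnxy : ¬G.Adj x y) :
    .inr x ∈ geoHull (compPrism G) S :=
  have : Nonempty V := ⟨x⟩
  (compPrism_connected G).preconnected.mem_geoHull_of_adj_of_adj hx hy (by simp)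
    (by simpa using hxy) rfl (compPrism_adj_inr_inr.2 ⟨hxy, hnxy⟩)

lemma inr_mem_geoHull_compPrism_of_adj {x y z : V} (hy : .inr y ∈ geoHull (compPrism G) S)
    (hz : .inr z ∈ geoHull (compPrism G) S) (hyz : G.Adj y z)
    (hxy : x ≠ y) (hnxy : ¬G.Adj x y) (hxz : x ≠ z) (hnxz : ¬G.Adj x z) :
    .inr x ∈ geoHull (compPrism G) S :=
  have : Nonempty V := ⟨x⟩
  (compPrism_connected G).preconnected.mem_geoHull_of_adj_of_adj hy hz
    (Sum.inr_injective.ne hyz.ne) (fun h => (compPrism_adj_inr_inr.1 h).2 hyz)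
    (compPrism_adj_inr_inr.2 ⟨hxy.symm, fun h => hnxy h.symm⟩)
    (compPrism_adj_inr_inr.2 ⟨hxz, hnxz⟩)

lemma inl_mem_geoHull_compPrism (hG : G.Preconnected)
    (hR : ∀ x, .inr x ∈ geoHull (compPrism G) S) (ha : .inl a ∈ geoHull (compPrism G) S)
    (x : V) :
    .inl x ∈ geoHull (compPrism G) S := by
  have : Nonempty V := ⟨a⟩
  obtain ⟨p⟩ := hG x a
  induction p with
  | nil => exact ha
  | cons h _ ih =>
    exact (compPrism_connected G).preconnected.mem_geoHull_of_adj_of_adj (hR _) (ih ha)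
      (by simp) (by simpa using h.ne) rfl h

lemma isHullSet_compPrism_of_adj_adj_adj (hG : G.Preconnected) (hab : G.Adj a b)
    (hbc : G.Adj b c) (hcd : G.Adj c d) (had : 2 < G.edist a d)
    (hsep : ∀ x, x ≠ b → x ≠ c →
      (¬G.Adj x a ∧ ¬G.Adj x b) ∨ (¬G.Adj x c ∧ ¬G.Adj x d)) :
    IsHullSet (compPrism G) {.inl a, .inl d} := by
  set K := geoHull (compPrism G) {.inl a, .inl d}
  have on_geodesic {z : V ⊕ V} {m n : ℕ} (hm : (compPrism G).dist (.inl a) z ≤ m)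
      (hn : (compPrism G).dist z (.inl d) ≤ n) (hmn : m + n ≤ 3) : z ∈ K :=
    mem_geoHull_compPrism_pair_of_dist_add_le had (by omega)
  obtain ⟨had', hnad, -⟩ := two_lt_edist_iff.1 had
  have hda : 2 < G.edist d a := edist_comm.trans_gt had
  have hadj_ad : (compPrism G).Adj (.inr a) (.inr d) := compPrism_adj_inr_inr.2 ⟨had', hnad⟩
  have hmatch (x : V) : (compPrism G).Adj (.inl x) (.inr x) := rfl
  have hleft {x y : V} (h : G.Adj x y) : (compPrism G).Adj (.inl x) (.inl y) := h
  have ha' : .inr a ∈ K := on_geodesic (dist_eq_one_iff_adj.2 (hmatch a)).le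
    (dist_le_two_of_adj_of_adj_s7 hadj_ad (hmatch d).symm) le_rfl
  have hd' : .inr d ∈ K := on_geodesic (dist_le_two_of_adj_of_adj_s7 (hmatch a) hadj_ad)
    (dist_eq_one_iff_adj.2 (hmatch d).symm).le le_rfl
  have hb : .inl b ∈ K := on_geodesic (dist_eq_one_iff_adj.2 (hleft hab)).le
    (dist_le_two_of_adj_of_adj_s7 (hleft hbc) (hleft hcd)) le_rfl
  have hc : .inl c ∈ K := on_geodesic (dist_le_two_of_adj_of_adj_s7 (hleft hab) (hleft hbc))
    (dist_eq_one_iff_adj.2 (hleft hcd)).le le_rfl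
  obtain ⟨hbd, hnbd⟩ := ne_and_not_adj_of_two_lt_edist had hab
  obtain ⟨hca, hnca⟩ := ne_and_not_adj_of_two_lt_edist hda hcd.symm
  have hb' : .inr b ∈ K := inr_mem_geoHull_compPrism_of_inl hb hd' hbd hnbd
  have hc' : .inr c ∈ K := inr_mem_geoHull_compPrism_of_inl hc ha' hca hnca
  have hR (x : V) : .inr x ∈ K := by
    by_cases hxb : x = b
    · exact hxb ▸ hb'
    by_cases hxc : x = c
    · exact hxc ▸ hc'
    rcases hsep x hxb hxc with ⟨hxa, hxb'⟩ | ⟨hxc', hxd⟩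
    · exact inr_mem_geoHull_compPrism_of_adj ha' hb' hab
        (by rintro rfl; exact hxb' hab) hxa hxb hxb'
    · exact inr_mem_geoHull_compPrism_of_adj hc' hd' hcd
        hxc hxc' (by rintro rfl; exact hxc' hcd.symm) hxd
  refine Set.eq_univ_of_forall fun x => ?_
  rcases x with x | x
  · exact inl_mem_geoHull_compPrism hG hR (subset_geoHull (Set.mem_insert _ _)) x
  · exact hR x

end ComplementaryPrism

theorem hullNumber_compPrism_tree_not_star_general {V : Type*} [Fintype V] (T : SimpleGraph V)
    (hconn : T.Connected) (hac : T.IsAcyclic)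
    (hstar : ¬ ∃ c : V, ∀ v : V, v ≠ c → T.Adj c v) :
    hullNumber (compPrism T) = 2 := by
  obtain ⟨a, b, c, d, hab, hbc, hcd, hne_ac, hne_bd, hne_ad⟩ := hconn.exists_adj_adj_adj hstar
  have hpath : (Walk.cons hab (.cons hbc (.cons hcd .nil))).IsPath := by
    simp [Walk.isPath_def, hab.ne, hbc.ne, hcd.ne, hne_ac, hne_bd, hne_ad]
  have had : 2 < T.edist a d := by
    rw [← (hconn a d).coe_dist_eq_edist, hac.dist_eq_length hpath]
    norm_num
  have : Nonempty V := ⟨a⟩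
  refine (compPrism_connected T).preconnected.hullNumber_eq_two (Sum.inl_injective.ne hne_ad) ?_
  exact isHullSet_compPrism_of_adj_adj_adj hconn.preconnected hab hbc hcd had fun x hxb hxc =>
    hac.not_adj_and_not_adj_or_not_adj_and_not_adj hab hbc hcd had hxb hxc

theorem hullNumber_compPrism_tree_not_star {V : Type*} [Fintype V] (T : SimpleGraph V)
    (hconn : T.Connected) (hac : T.IsAcyclic) (hcard : 3 ≤ Fintype.card V)
    (hstar : ¬ ∃ c : V, ∀ v : V, v ≠ c → T.Adj c v) :
    hullNumber (compPrism T) = 2 :=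
  hullNumber_compPrism_tree_not_star_general T hconn hac hstar
end
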